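/- arXiv:1901.07085 — 3 statements merged into one kernel-verified Lean document; each statement's English description precedes it below -/
import Mathlib

section
/- Let σ ∈ S_k correspond to an Eulerian trail of a digraph G containing two edge-disjoint parallel subtrails q_1 and q_2 (same start and end vertices), with h edges of the trail strictly between q_1 and q_2. Then the permutation σ^{q_1↔q_2} obtained by swapping the two subtrails satisfies sgn(σ^{q_1↔q_2}) = (-1)^{|q_1|(h+|q_2|) + h|q_2|} · sgn(σ), where |q| denotes the number of edges of the trail q. -/
open scoped Classical

noncomputable section

/-- The permutation `σ_M ∈ S_{|M|}` induced by the relative order of `σ` on `M`. -/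
def sigmaMPerm {k : ℕ} (σ : Equiv.Perm (Fin k)) (M : Finset (Fin k)) :
    Equiv.Perm (Fin M.card) :=
  (M.orderIsoOfFin rfl).toEquiv.trans
    ((σ.subtypeEquiv (fun a =>
        ⟨fun h => Finset.mem_image_of_mem _ h, fun h => by
          obtain ⟨b, hb, hba⟩ := Finset.mem_image.mp h
          rwa [← σ.injective hba]⟩)).trans
      ((M.image ⇑σ).orderIsoOfFin
        (Finset.card_image_of_injective M σ.injective)).toEquiv.symm)

/-- `(a_{σ(0)},…,a_{σ(k-1)})` is a directed Eulerian trail from `s` to `t`. -/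
def IsEulerianTrail {V : Type*} {k : ℕ} (src tgt : Fin k → V) (s t : V)
    (σ : Equiv.Perm (Fin k)) : Prop :=
  (∀ h0 : 0 < k, src (σ ⟨0, h0⟩) = s ∧ tgt (σ ⟨k - 1, Nat.sub_lt h0 Nat.one_pos⟩) = t) ∧
  ∀ (j : ℕ) (hj : j + 1 < k), src (σ ⟨j + 1, hj⟩) = tgt (σ ⟨j, Nat.lt_of_succ_lt hj⟩)

/-- The signed sum `S(G,B) = Σ_{σ ∈ P(G)} sgn(σ)·sgn(σ_{M(B)})`. -/
def SGB {V : Type*} {k : ℕ} (src tgt : Fin k → V) (s t : V) (B : Finset (Fin k)) : ℤ :=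
  ∑ σ : Equiv.Perm (Fin k),
    if IsEulerianTrail src tgt s t σ then
      (Equiv.Perm.sign σ : ℤ) * (Equiv.Perm.sign (sigmaMPerm σ B) : ℤ)
    else 0

/-- The standard polynomial `s_k` evaluated at `x`. -/
def sPoly {A : Type*} [Ring A] {k : ℕ} (x : Fin k → A) : A :=
  ∑ π : Equiv.Perm (Fin k), (Equiv.Perm.sign π : ℤ) • (List.ofFn fun i => x (π i)).prod

/-- `q` occurs as a (contiguous) subtrail of the Eulerian trail given by `σ`. -/
def ContainsSubtrail {k l : ℕ} (σ : Equiv.Perm (Fin k)) (q : Fin l → Fin k) : Prop :=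
  ∃ p : ℕ, ∃ _hp : p + l ≤ k, ∀ d : Fin l, σ ⟨p + d, by have := d.isLt; omega⟩ = q d

/-!
Write `a, b, c` for the lengths of `q₁`, of the stretch between the subtrails, and of `q₂`. Then
`σ'` is `σ` followed by the rearrangement of positions that turns the window `q₁ · mid · q₂` into
`q₂ · mid · q₁`. This is the composite of two swaps of adjacent blocks, of lengths `(a, b + c)` and
then `(b, c)`. A swap of adjacent blocks of lengths `m, n` is a rotation of a window of length
`m + n` by `m` steps, of sign `(-1)^((m + n - 1) m) = (-1)^(m n)`.
-/

open Equiv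

theorem coe_finRotate_pow (L n : ℕ) (x : Fin L) : ((finRotate L ^ n) x : ℕ) = (x + n) % L := by
  rcases L with _ | L
  · exact x.elim0
  induction n with
  | zero => simp [Nat.mod_eq_of_lt x.isLt]
  | succ n ih =>
    rw [pow_succ', Perm.mul_apply, finRotate_apply, Fin.val_add, ih, Fin.val_one', ← Nat.add_mod,
      add_assoc]

theorem sign_finRotate_pow (L n : ℕ) : Perm.sign (finRotate L ^ n) = (-1) ^ ((L - 1) * n) := by
  rw [map_pow, sign_finRotate, pow_mul]

namespace Fin

/-- Right multiplication by `swapBlocks p m n h` exchanges the block of length `m` starting at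
position `p` with the block of length `n` that follows it. -/
def swapBlocks {k : ℕ} (p m n : ℕ) (h : p + (m + n) ≤ k) : Perm (Fin k) :=
  (finRotate (m + n) ^ m).viaFintypeEmbedding ((natAddEmb p).trans (castLEEmb h))

section swapBlocks

variable {k p m n : ℕ} {h : p + (m + n) ≤ k} {x : Fin k}

theorem swapBlocks_apply_of_not_mem (hx : x < p ∨ p + (m + n) ≤ x) : swapBlocks p m n h x = x :=
  Perm.viaFintypeEmbedding_apply_notMem_range _ _ <| by
    rintro ⟨y, rfl⟩
    simp only [Function.Embedding.trans_apply, natAddEmb_apply, castLEEmb_apply, val_castLE,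
      val_natAdd] at hx
    omega

theorem val_swapBlocks (hp : p ≤ x) (hx : x < p + (m + n)) :
    (swapBlocks p m n h x : ℕ) = p + (x - p + m) % (m + n) := by
  have hx' : x = (natAddEmb p).trans (castLEEmb h) ⟨x - p, by omega⟩ := by
    ext
    simp only [Function.Embedding.trans_apply, natAddEmb_apply, natAdd_mk, castLEEmb_apply,
      castLE_mk]
    omega
  rw [hx', swapBlocks, Perm.viaFintypeEmbedding_apply_image]
  simp [coe_finRotate_pow]

theorem val_swapBlocks_of_lt (hp : p ≤ x) (hx : x < p + n) :
    (swapBlocks p m n h x : ℕ) = x + m := by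
  rw [val_swapBlocks hp (by omega), Nat.mod_eq_of_lt (by omega)]
  omega

theorem val_swapBlocks_of_ge (hp : p + n ≤ x) (hx : x < p + (m + n)) :
    (swapBlocks p m n h x : ℕ) = x - n := by
  rw [val_swapBlocks (by omega) hx, Nat.mod_eq_sub_mod (by omega), Nat.mod_eq_of_lt (by omega)]
  omega

theorem sign_swapBlocks : Perm.sign (swapBlocks p m n h) = (-1) ^ (m * n) := by
  have hexp : (m + n - 1) * m = m * n + m * (m - 1) := by
    rcases m with _ | m
    · simp
    · rw [show m + 1 + n - 1 = m + n by omega, Nat.add_sub_cancel]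
      ring
  rw [swapBlocks, Perm.viaFintypeEmbedding_sign, sign_finRotate_pow, hexp, pow_add,
    (Nat.even_mul_pred_self m).neg_one_pow, mul_one]

end swapBlocks

theorem eq_mul_swapBlocks_of_exchange_outer_blocks {k : ℕ} {σ σ' : Perm (Fin k)}
    {i a b c : ℕ}
    (hk : i + a + b + c ≤ k)
    (hout : ∀ x : Fin k, (x : ℕ) < i ∨ i + a + b + c ≤ x → σ' x = σ x)
    (hC : ∀ d : ℕ, (hd : d < c) → σ' ⟨i + d, by omega⟩ = σ ⟨i + a + b + d, by omega⟩)
    (hB : ∀ d : ℕ, (hd : d < b) → σ' ⟨i + c + d, by omega⟩ = σ ⟨i + a + d, by omega⟩)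
    (hA : ∀ d : ℕ, (hd : d < a) → σ' ⟨i + c + b + d, by omega⟩ = σ ⟨i + d, by omega⟩) :
    σ' = σ * swapBlocks i a (b + c) (by omega) * swapBlocks i b c (by omega) := by
  set τ₁ := swapBlocks i a (b + c) (by omega : i + (a + (b + c)) ≤ k)
  set τ₂ := swapBlocks i b c (by omega : i + (b + c) ≤ k)
  refine Equiv.ext fun x => ?_
  rw [Perm.mul_apply, Perm.mul_apply]
  by_cases hx : x < i ∨ i + a + b + c ≤ x
  · rw [hout x hx, swapBlocks_apply_of_not_mem (x := x) (by omega),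
      swapBlocks_apply_of_not_mem (by omega)]
  obtain ⟨d, hxd⟩ := Nat.exists_eq_add_of_le (not_lt.mp (not_or.mp hx).1)
  rcases (by omega : d < c ∨ (c ≤ d ∧ d < c + b) ∨ c + b ≤ d) with hd | hd | hd
  · have h₂ : (τ₂ x : ℕ) = x + b := val_swapBlocks_of_lt (by omega) (by omega)
    have h₁ : (τ₁ (τ₂ x) : ℕ) = i + a + b + d := by
      rw [val_swapBlocks_of_lt] <;> omega
    have hx' : x = ⟨i + d, by omega⟩ := Fin.ext hxd
    rw [hx', hC d hd, ← hx']
    exact congrArg σ (Fin.ext h₁.symm)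
  · have h₂ : (τ₂ x : ℕ) = x - c := val_swapBlocks_of_ge (by omega) (by omega)
    have h₁ : (τ₁ (τ₂ x) : ℕ) = i + a + (d - c) := by
      rw [val_swapBlocks_of_lt] <;> omega
    have hx' : x = ⟨i + c + (d - c), by omega⟩ :=
      Fin.ext (show (x : ℕ) = i + c + (d - c) by omega)
    rw [hx', hB (d - c) (by omega), ← hx']
    exact congrArg σ (Fin.ext h₁.symm)
  · have h₂ : τ₂ x = x := swapBlocks_apply_of_not_mem (by omega)
    have h₁ : (τ₁ (τ₂ x) : ℕ) = i + (d - (c + b)) := by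
      rw [h₂, val_swapBlocks_of_ge] <;> omega
    have hx' : x = ⟨i + c + b + (d - (c + b)), by omega⟩ :=
      Fin.ext (show (x : ℕ) = i + c + b + (d - (c + b)) by omega)
    rw [hx', hA (d - (c + b)) (by omega), ← hx']
    exact congrArg σ (Fin.ext h₁.symm)

end Fin

/-- Swapping two edge-disjoint parallel subtrails `q₁` (positions
`i,…,i+r`) and `q₂` (positions `j,…,j+u`, with `i + r < j`) of an Eulerian trail `σ`,
with `h = j - (i+r+1)` edges strictly between them, yields an Eulerian trail `σ'` with
`sgn(σ') = (-1)^{|q₁|(h+|q₂|)+h|q₂|}·sgn(σ)`, where `|q₁| = r+1`, `|q₂| = u+1`. -/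
theorem sign_swap_parallel_subtrails {k : ℕ}
    (σ σ' : Equiv.Perm (Fin k)) (i r j u : ℕ)
    (h1 : i + r < j) (h2 : j + u < k)
    (hout : ∀ p : Fin k, ((p : ℕ) < i ∨ j + u < (p : ℕ)) → σ' p = σ p)
    (hq2 : ∀ d : ℕ, (hd : d ≤ u) → σ' ⟨i + d, by omega⟩ = σ ⟨j + d, by omega⟩)
    (hmid : ∀ d : ℕ, (hd : i + r + 1 + d < j) →
      σ' ⟨i + u + 1 + d, by omega⟩ = σ ⟨i + r + 1 + d, by omega⟩)
    (hq1 : ∀ d : ℕ, (hd : d ≤ r) → σ' ⟨j + u - r + d, by omega⟩ = σ ⟨i + d, by omega⟩) :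
    (Equiv.Perm.sign σ' : ℤ)
      = (-1) ^ ((r + 1) * ((j - (i + r + 1)) + (u + 1)) + (j - (i + r + 1)) * (u + 1))
        * (Equiv.Perm.sign σ : ℤ) := by
  have hσ' := Fin.eq_mul_swapBlocks_of_exchange_outer_blocks (σ := σ) (σ' := σ') (i := i)
    (a := r + 1) (b := j - (i + r + 1)) (c := u + 1) (by omega) (fun x hx => hout x (by omega))
    (fun d hd => by convert hq2 d (by omega) using 3; omega)
    (fun d hd => hmid d (by omega))
    (fun d hd => by convert hq1 d (by omega) using 3; omega)
  rw [hσ', map_mul, map_mul, Fin.sign_swapBlocks, Fin.sign_swapBlocks]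
  push_cast
  ring

end
end

section
/- For n = 2 and any m̄ ≥ 1, the doubly-rooted digraph G_2 on vertices {1,2} with source 1 and target 2, whose edges are a_{2ℓ-1} = (1,2) and a_{2ℓ} = (2,1) for ℓ = 1,...,m̄, together with a loop a_{2m̄+1} = (1,1), an edge a_{2m̄+2} = (1,2), and a loop a_{2m̄+3} = (2,2), has exactly ((m̄+1)!)²·(m̄+1) directed Eulerian trails from 1 to 2. -/
open scoped Classical

noncomputable section

/-- Source map of the digraph `G₂` (vertices `0,1` standing for `1,2`): edges
`0,…,2m̄-1` alternate `(0,1),(1,0)`; edge `2m̄` is the loop `(0,0)`; edge `2m̄+1`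
is `(0,1)`; edge `2m̄+2` is the loop `(1,1)`. -/
def srcG2 (mb : ℕ) : ℕ → ℕ := fun e =>
  if e < 2 * mb then e % 2
  else if e = 2 * mb then 0
  else if e = 2 * mb + 1 then 0
  else 1

/-- Target map of the digraph `G₂`. -/
def tgtG2 (mb : ℕ) : ℕ → ℕ := fun e =>
  if e < 2 * mb then (e + 1) % 2
  else if e = 2 * mb then 0
  else 1


/-!
An Eulerian trail is determined by its word of edge types `(source, target)` together with a
permutation of each class of parallel edges, so the number of trails is the number of admissible
words times `∏ (class size)! = (m̄+1)! · m̄!`. Apart from its two loops, an admissible word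
alternates `(0,1)`, `(1,0)`, starting and ending with `(0,1)`; it is therefore determined by where
the loops sit: the loop at `0` just before one of the `m̄+1` forward edges, the loop at `1` just
after one of them. This gives `(m̄+1)²` words.
-/

open Finset

theorem card_comp_perm_eq_card_stabilizer {α ι : Type*} [Fintype α] [DecidableEq α]
    [DecidableEq ι] (f : α → ι) (σ₀ : Equiv.Perm α) :
    Fintype.card {σ : Equiv.Perm α // f ∘ σ = f ∘ σ₀} =
      Fintype.card {g : Equiv.Perm α // f ∘ g = f} :=
  Fintype.card_congr <| (Equiv.mulRight σ₀⁻¹).subtypeEquiv fun σ => by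
    simp [Equiv.Perm.coe_mul, ← Function.comp_assoc, Equiv.comp_symm_eq]

theorem card_filter_comp_perm {α ι : Type*} [Fintype α] [DecidableEq α] [DecidableEq ι]
    (f : α → ι) (P : (α → ι) → Prop) :
    #{σ : Equiv.Perm α | P (f ∘ σ)} =
      #{w ∈ univ.image (fun σ : Equiv.Perm α => f ∘ σ) | P w} *
        Fintype.card {g : Equiv.Perm α // f ∘ g = f} := by
  rw [card_eq_sum_card_fiberwise (f := fun σ : Equiv.Perm α => f ∘ σ)
    (t := {w ∈ univ.image (fun σ : Equiv.Perm α => f ∘ σ) | P w}), ← smul_eq_mul, ← sum_const]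
  · refine sum_congr rfl fun w hw => ?_
    obtain ⟨⟨σ₀, -, rfl⟩, hP⟩ := by simpa using hw
    rw [← card_comp_perm_eq_card_stabilizer f σ₀, Fintype.card_subtype, filter_filter]
    congr 1
    exact filter_congr fun σ _ => and_iff_right_of_imp fun h => h ▸ hP
  · intro σ hσ
    simpa using hσ

/-- `IsEulerianTrail src tgt s t σ` is, by definition,
`IsWalkWord (fun i => (src (σ i), tgt (σ i))) s t`. -/
def IsWalkWord {V : Type*} {k : ℕ} (w : Fin k → V × V) (s t : V) : Prop :=
  IsEulerianTrail (fun i => (w i).1) (fun i => (w i).2) s t (Equiv.refl _)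

namespace G2

def unmarkedRank (a b t : ℕ) : ℕ :=
  t - (if a < t then 1 else 0) - (if b < t then 1 else 0)

/-- The word of the walk from `0` that takes the loop at `0` at step `a`, the loop at `1` at
step `b`, and otherwise alternates `(0,1)`, `(1,0)`; `unmarkedRank a b t` counts its non-loop
steps before step `t`. -/
def loopWord (a b t : ℕ) : ℕ × ℕ :=
  if t = a then (0, 0)
  else if t = b then (1, 1)
  else (unmarkedRank a b t % 2, (unmarkedRank a b t + 1) % 2)

lemma unmarkedRank_zero (a b : ℕ) : unmarkedRank a b 0 = 0 := by
  simp [unmarkedRank]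

lemma unmarkedRank_succ {a b : ℕ} (hab : a ≠ b) (t : ℕ) :
    unmarkedRank a b (t + 1) =
      if t = a ∨ t = b then unmarkedRank a b t else unmarkedRank a b t + 1 := by
  unfold unmarkedRank; split_ifs <;> omega

lemma unmarkedRank_add_two_le {k a b t : ℕ} (hab : a ≠ b) (ha : a < k) (hb : b < k)
    (ht : t < k) : unmarkedRank a b t + 2 ≤ k := by
  unfold unmarkedRank; split_ifs <;> omega

lemma unmarkedRank_add_three_le {k a b t : ℕ} (hab : a ≠ b) (ha : a < k) (hb : b < k)
    (ht : t < k) (hta : t ≠ a) (htb : t ≠ b) : unmarkedRank a b t + 3 ≤ k := by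
  unfold unmarkedRank; split_ifs <;> omega

lemma fst_loopWord {a b : ℕ} (ha : unmarkedRank a b a % 2 = 0)
    (hb : unmarkedRank a b b % 2 = 1) (t : ℕ) :
    (loopWord a b t).1 = unmarkedRank a b t % 2 := by
  unfold loopWord
  split_ifs with hta htb
  · exact hta ▸ ha.symm
  · exact htb ▸ hb.symm
  · rfl

lemma snd_loopWord {a b : ℕ} (hab : a ≠ b) (ha : unmarkedRank a b a % 2 = 0)
    (hb : unmarkedRank a b b % 2 = 1) (t : ℕ) :
    (loopWord a b t).2 = unmarkedRank a b (t + 1) % 2 := by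
  rw [unmarkedRank_succ hab]
  unfold loopWord
  split_ifs <;> subst_vars <;> simp_all

lemma loopWord_eq_loop0_iff {a b t : ℕ} : loopWord a b t = (0, 0) ↔ t = a := by
  unfold loopWord
  split_ifs <;> simp_all
  omega

lemma loopWord_eq_loop1_iff {a b t : ℕ} (hab : a ≠ b) : loopWord a b t = (1, 1) ↔ t = b := by
  unfold loopWord
  split_ifs <;> simp_all
  omega

theorem isWalkWord_loopWord {k a b : ℕ} (hk : k % 2 = 1) (hab : a ≠ b) (ha' : a < k)
    (hb' : b < k) (ha : unmarkedRank a b a % 2 = 0) (hb : unmarkedRank a b b % 2 = 1) :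
    IsWalkWord (fun t : Fin k => loopWord a b t) 0 1 := by
  refine ⟨fun _ => ⟨?_, ?_⟩, fun j _ => ?_⟩
  · simp [fst_loopWord ha hb, unmarkedRank_zero]
  · simp only [Equiv.refl_apply, snd_loopWord hab ha hb]
    unfold unmarkedRank; split_ifs <;> omega
  · simp [fst_loopWord ha hb, snd_loopWord hab ha hb]

section WalkWord

variable {k : ℕ} {w : Fin k → ℕ × ℕ} {a b : Fin k}

theorem fst_eq_unmarkedRank_of_isWalkWord (hw : IsWalkWord w 0 1) (hab : a ≠ b)
    (ha : w a = (0, 0)) (hb : w b = (1, 1))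
    (hother : ∀ t, t ≠ a → t ≠ b → w t = (0, 1) ∨ w t = (1, 0)) (t : Fin k) :
    (w t).1 = unmarkedRank a b t % 2 := by
  suffices ∀ (t : ℕ) (ht : t < k), (w ⟨t, ht⟩).1 = unmarkedRank a b t % 2 from this t t.isLt
  intro t
  induction t with
  | zero => intro ht; simpa [unmarkedRank_zero] using (hw.1 ht).1
  | succ t ih =>
    intro ht
    have ih := ih (by omega)
    have hstep : (w ⟨t + 1, ht⟩).1 = (w ⟨t, by omega⟩).2 := hw.2 t ht
    rw [hstep, unmarkedRank_succ (Fin.val_injective.ne hab)]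
    by_cases hta : (⟨t, by omega⟩ : Fin k) = a
    · rw [if_pos (Or.inl (congrArg Fin.val hta)), ← ih, hta, ha]
    by_cases htb : (⟨t, by omega⟩ : Fin k) = b
    · rw [if_pos (Or.inr (congrArg Fin.val htb)), ← ih, htb, hb]
    rw [if_neg fun h => h.elim (fun h => hta (Fin.ext h)) (fun h => htb (Fin.ext h))]
    rcases hother _ hta htb with h | h <;> rw [h] at ih ⊢ <;> dsimp only at ih ⊢ <;> omega

theorem eq_loopWord_of_isWalkWord (hw : IsWalkWord w 0 1) (hab : a ≠ b)
    (ha : w a = (0, 0)) (hb : w b = (1, 1))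
    (hother : ∀ t, t ≠ a → t ≠ b → w t = (0, 1) ∨ w t = (1, 0)) (t : Fin k) :
    w t = loopWord a b t := by
  rcases eq_or_ne t a with rfl | hta
  · rw [ha, loopWord_eq_loop0_iff.mpr rfl]
  rcases eq_or_ne t b with rfl | htb
  · rw [hb, (loopWord_eq_loop1_iff (Fin.val_injective.ne hab)).mpr rfl]
  have hv := fst_eq_unmarkedRank_of_isWalkWord hw hab ha hb hother t
  unfold loopWord
  rw [if_neg (Fin.val_injective.ne hta), if_neg (Fin.val_injective.ne htb)]
  rcases hother t hta htb with h | h <;> rw [h] at hv ⊢ <;> ext <;> dsimp only at * <;> omega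

end WalkWord

/-- The step of the loop at `0` when it is taken just before the `i`-th forward edge and the
loop at `1` just after the `j`-th (counting from `0`); `loop1Pos i j` is the step of the loop
at `1`. -/
def loop0Pos (i j : ℕ) : ℕ := 2 * i + if j < i then 1 else 0

def loop1Pos (i j : ℕ) : ℕ := 2 * j + 1 + if i ≤ j then 1 else 0

lemma loop0Pos_ne_loop1Pos (i j : ℕ) : loop0Pos i j ≠ loop1Pos i j := by
  unfold loop0Pos loop1Pos; split_ifs <;> omega

lemma unmarkedRank_eq_iff_eq_loopPos {a b i j : ℕ} :
    unmarkedRank a b a = 2 * i ∧ unmarkedRank a b b = 2 * j + 1 ↔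
      a = loop0Pos i j ∧ b = loop1Pos i j := by
  unfold unmarkedRank loop0Pos loop1Pos; split_ifs <;> omega

lemma unmarkedRank_loopPos (i j : ℕ) :
    unmarkedRank (loop0Pos i j) (loop1Pos i j) (loop0Pos i j) = 2 * i ∧
      unmarkedRank (loop0Pos i j) (loop1Pos i j) (loop1Pos i j) = 2 * j + 1 :=
  unmarkedRank_eq_iff_eq_loopPos.mpr ⟨rfl, rfl⟩

lemma loopPos_lt {k i j : ℕ} (hi : 2 * i + 2 ≤ k) (hj : 2 * j + 3 ≤ k) :
    loop0Pos i j < k ∧ loop1Pos i j < k := by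
  unfold loop0Pos loop1Pos; split_ifs <;> omega

theorem exists_eq_loopWord_of_isWalkWord {k : ℕ} {w : Fin k → ℕ × ℕ}
    (hw : IsWalkWord w 0 1) {a b : Fin k} (hab : a ≠ b)
    (ha : w a = (0, 0)) (hb : w b = (1, 1))
    (hother : ∀ t, t ≠ a → t ≠ b → w t = (0, 1) ∨ w t = (1, 0)) :
    ∃ i j, 2 * i + 2 ≤ k ∧ 2 * j + 3 ≤ k ∧
      w = fun t : Fin k => loopWord (loop0Pos i j) (loop1Pos i j) t := by
  have hab' : (a : ℕ) ≠ b := Fin.val_injective.ne hab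
  have hra := fst_eq_unmarkedRank_of_isWalkWord hw hab ha hb hother a
  have hrb := fst_eq_unmarkedRank_of_isWalkWord hw hab ha hb hother b
  rw [ha] at hra
  rw [hb] at hrb
  have hla := unmarkedRank_add_two_le (t := a) hab' a.isLt b.isLt a.isLt
  have hlb := unmarkedRank_add_two_le (t := b) hab' a.isLt b.isLt b.isLt
  obtain ⟨h0, h1⟩ := (unmarkedRank_eq_iff_eq_loopPos (a := a) (b := b)
    (i := unmarkedRank a b a / 2) (j := unmarkedRank a b b / 2)).mp ⟨by omega, by omega⟩
  refine ⟨unmarkedRank a b a / 2, unmarkedRank a b b / 2, by omega, by omega,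
    funext fun t => ?_⟩
  rw [← h0, ← h1]
  exact eq_loopWord_of_isWalkWord hw hab ha hb hother t

def edgeType (mb : ℕ) (e : Fin (2 * mb + 3)) : ℕ × ℕ := (srcG2 mb e, tgtG2 mb e)

section EdgeType

variable {mb : ℕ} {e : Fin (2 * mb + 3)}

lemma edgeType_eq_loop0_iff : edgeType mb e = (0, 0) ↔ (e : ℕ) = 2 * mb := by
  grind [edgeType, srcG2, tgtG2]

lemma edgeType_eq_loop1_iff : edgeType mb e = (1, 1) ↔ (e : ℕ) = 2 * mb + 2 := by
  grind [edgeType, srcG2, tgtG2]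

lemma edgeType_eq_forward_iff :
    edgeType mb e = (0, 1) ↔ (e : ℕ) % 2 = 0 ∧ (e : ℕ) < 2 * mb ∨ (e : ℕ) = 2 * mb + 1 := by
  grind [edgeType, srcG2, tgtG2]

lemma edgeType_eq_backward_iff :
    edgeType mb e = (1, 0) ↔ (e : ℕ) % 2 = 1 ∧ (e : ℕ) < 2 * mb := by
  grind [edgeType, srcG2, tgtG2]

lemma edgeType_cases :
    edgeType mb e = (0, 0) ∨ edgeType mb e = (1, 1) ∨ edgeType mb e = (0, 1) ∨
      edgeType mb e = (1, 0) := by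
  rw [edgeType_eq_loop0_iff, edgeType_eq_loop1_iff, edgeType_eq_forward_iff,
    edgeType_eq_backward_iff]
  omega

end EdgeType

lemma card_edgeType_loop0 (mb : ℕ) : Fintype.card {e // edgeType mb e = (0, 0)} = 1 :=
  Fintype.card_eq_one_iff.mpr ⟨⟨⟨2 * mb, by omega⟩, edgeType_eq_loop0_iff.mpr rfl⟩,
    fun e => Subtype.ext (Fin.ext (edgeType_eq_loop0_iff.mp e.2))⟩

lemma card_edgeType_loop1 (mb : ℕ) : Fintype.card {e // edgeType mb e = (1, 1)} = 1 :=
  Fintype.card_eq_one_iff.mpr ⟨⟨⟨2 * mb + 2, by omega⟩, edgeType_eq_loop1_iff.mpr rfl⟩,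
    fun e => Subtype.ext (Fin.ext (edgeType_eq_loop1_iff.mp e.2))⟩

lemma card_edgeType_forward (mb : ℕ) :
    Fintype.card {e // edgeType mb e = (0, 1)} = mb + 1 := by
  refine (Fintype.card_congr ?_).trans (Fintype.card_fin (mb + 1))
  exact {
    toFun := fun e => ⟨if (e : ℕ) = 2 * mb + 1 then mb else e / 2, by
      have := edgeType_eq_forward_iff.mp e.2; split_ifs <;> omega⟩
    invFun := fun j => ⟨⟨if (j : ℕ) < mb then 2 * j else 2 * mb + 1, by split_ifs <;> omega⟩,
      edgeType_eq_forward_iff.mpr (by dsimp only; split_ifs <;> omega)⟩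
    left_inv := fun e => by
      have := edgeType_eq_forward_iff.mp e.2
      ext; dsimp only; split_ifs <;> omega
    right_inv := fun j => by ext; dsimp only; split_ifs <;> omega }

lemma card_edgeType_backward (mb : ℕ) : Fintype.card {e // edgeType mb e = (1, 0)} = mb := by
  refine (Fintype.card_congr ?_).trans (Fintype.card_fin mb)
  exact {
    toFun := fun e => ⟨e / 2, by have := edgeType_eq_backward_iff.mp e.2; omega⟩
    invFun := fun j => ⟨⟨2 * j + 1, by omega⟩,
      edgeType_eq_backward_iff.mpr (by dsimp only; omega)⟩
    left_inv := fun e => by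
      have := edgeType_eq_backward_iff.mp e.2
      ext; dsimp only; omega
    right_inv := fun j => by ext; dsimp only; omega }

theorem card_stabilizer_edgeType (mb : ℕ) :
    Fintype.card {g : Equiv.Perm (Fin (2 * mb + 3)) // edgeType mb ∘ g = edgeType mb} =
      (mb + 1).factorial * mb.factorial := by
  rw [DomMulAct.stabilizer_card', prod_subset (s₂ := {(0, 0), (1, 1), (0, 1), (1, 0)})]
  · simp [card_edgeType_loop0, card_edgeType_loop1, card_edgeType_forward,
      card_edgeType_backward]
  · intro c hc
    obtain ⟨e, -, rfl⟩ := mem_image.mp hc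
    simpa using edgeType_cases
  · intro c _ hc
    rw [Fintype.card_eq_zero_iff.mpr ⟨fun e => hc (mem_image.mpr ⟨e.1, mem_univ _, e.2⟩)⟩]
    rfl

/-- A trail of `G₂` with word `loopWord a b`: its non-loop steps use the edges
`0, 1, …, 2m̄-1, 2m̄+1` in this order. -/
def canonicalEdge (mb a b t : ℕ) : ℕ :=
  if t = a then 2 * mb
  else if t = b then 2 * mb + 2
  else if unmarkedRank a b t < 2 * mb then unmarkedRank a b t
  else 2 * mb + 1

section CanonicalEdge

variable {mb a b t : ℕ}

lemma canonicalEdge_lt (ht : t < 2 * mb + 3) : canonicalEdge mb a b t < 2 * mb + 3 := by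
  unfold canonicalEdge unmarkedRank; split_ifs <;> omega

lemma canonicalEdge_injOn (hab : a ≠ b) (ha : a < 2 * mb + 3) (hb : b < 2 * mb + 3)
    {t' : ℕ} (ht : t < 2 * mb + 3) (ht' : t' < 2 * mb + 3)
    (h : canonicalEdge mb a b t = canonicalEdge mb a b t') : t = t' := by
  unfold canonicalEdge unmarkedRank at h; split_ifs at h <;> omega

lemma edgeType_canonicalEdge (hab : a ≠ b) (ha : a < 2 * mb + 3) (hb : b < 2 * mb + 3)
    (ht : t < 2 * mb + 3) :
    edgeType mb ⟨canonicalEdge mb a b t, canonicalEdge_lt ht⟩ = loopWord a b t := by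
  unfold loopWord
  split_ifs with hta htb
  · exact edgeType_eq_loop0_iff.mpr (by simp [canonicalEdge, hta])
  · exact edgeType_eq_loop1_iff.mpr (by simp only [canonicalEdge, if_neg hta, if_pos htb])
  have hr := unmarkedRank_add_three_le hab ha hb ht hta htb
  rcases Nat.mod_two_eq_zero_or_one (unmarkedRank a b t) with h | h
  · rw [h, show (unmarkedRank a b t + 1) % 2 = 1 by omega, edgeType_eq_forward_iff]
    simp only [canonicalEdge, if_neg hta, if_neg htb]
    split_ifs <;> omega
  · rw [h, show (unmarkedRank a b t + 1) % 2 = 0 by omega, edgeType_eq_backward_iff]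
    simp only [canonicalEdge, if_neg hta, if_neg htb]
    split_ifs <;> omega

end CanonicalEdge

theorem exists_perm_edgeType_comp_eq_loopWord {mb a b : ℕ} (hab : a ≠ b)
    (ha : a < 2 * mb + 3) (hb : b < 2 * mb + 3) :
    ∃ σ : Equiv.Perm (Fin (2 * mb + 3)),
      edgeType mb ∘ σ = fun t : Fin (2 * mb + 3) => loopWord a b t := by
  let g : Fin (2 * mb + 3) → Fin (2 * mb + 3) := fun t =>
    ⟨canonicalEdge mb a b t, canonicalEdge_lt t.isLt⟩
  have hg : Function.Injective g := fun t t' h =>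
    Fin.ext (canonicalEdge_injOn hab ha hb t.isLt t'.isLt (congrArg Fin.val h))
  exact ⟨Equiv.ofBijective g (Finite.injective_iff_bijective.mp hg),
    funext fun t => edgeType_canonicalEdge hab ha hb t.isLt⟩

theorem walkWords_edgeType_eq (mb : ℕ) :
    {w ∈ univ.image (fun σ : Equiv.Perm (Fin (2 * mb + 3)) => edgeType mb ∘ σ) |
        IsWalkWord w 0 1} =
      univ.image fun ij : Fin (mb + 1) × Fin (mb + 1) =>
        fun t : Fin (2 * mb + 3) => loopWord (loop0Pos ij.1 ij.2) (loop1Pos ij.1 ij.2) t := by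
  ext w
  simp only [mem_filter, mem_image, mem_univ, true_and]
  constructor
  · rintro ⟨⟨σ, rfl⟩, hw⟩
    have hloop : (⟨2 * mb, by omega⟩ : Fin (2 * mb + 3)) ≠ ⟨2 * mb + 2, by omega⟩ := by simp
    obtain ⟨i, j, hi, hj, h⟩ := exists_eq_loopWord_of_isWalkWord hw (σ.symm.injective.ne hloop)
      (by simpa using edgeType_eq_loop0_iff.mpr rfl) (by simpa using edgeType_eq_loop1_iff.mpr rfl)
      fun t ha hb => by
        have h0 : (σ t : ℕ) ≠ 2 * mb := fun h => ha (σ.eq_symm_apply.mpr (Fin.ext h))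
        have h1 : (σ t : ℕ) ≠ 2 * mb + 2 := fun h => hb (σ.eq_symm_apply.mpr (Fin.ext h))
        have := edgeType_cases (e := σ t)
        rw [edgeType_eq_loop0_iff, edgeType_eq_loop1_iff] at this
        simpa [h0, h1] using this
    exact ⟨(⟨i, by omega⟩, ⟨j, by omega⟩), h.symm⟩
  · rintro ⟨⟨i, j⟩, rfl⟩
    dsimp only
    obtain ⟨h0, h1⟩ := loopPos_lt (k := 2 * mb + 3) (i := i) (j := j) (by omega) (by omega)
    obtain ⟨hr0, hr1⟩ := unmarkedRank_loopPos i j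
    exact ⟨exists_perm_edgeType_comp_eq_loopWord (loop0Pos_ne_loop1Pos i j) h0 h1,
      isWalkWord_loopWord (by omega) (loop0Pos_ne_loop1Pos i j) h0 h1 (by omega) (by omega)⟩

theorem loopWord_loopPos_injective (mb : ℕ) :
    Function.Injective fun ij : Fin (mb + 1) × Fin (mb + 1) =>
      fun t : Fin (2 * mb + 3) => loopWord (loop0Pos ij.1 ij.2) (loop1Pos ij.1 ij.2) t := by
  rintro ⟨i, j⟩ ⟨i', j'⟩ h
  obtain ⟨h0, h1⟩ := loopPos_lt (k := 2 * mb + 3) (i := i) (j := j) (by omega) (by omega)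
  have e0 := congrFun h ⟨_, h0⟩
  have e1 := congrFun h ⟨_, h1⟩
  simp only at e0 e1
  rw [loopWord_eq_loop0_iff.mpr rfl, eq_comm, loopWord_eq_loop0_iff] at e0
  rw [(loopWord_eq_loop1_iff (loop0Pos_ne_loop1Pos i j)).mpr rfl, eq_comm,
    loopWord_eq_loop1_iff (loop0Pos_ne_loop1Pos i' j')] at e1
  have hr := unmarkedRank_loopPos i j
  have hr' := unmarkedRank_loopPos i' j'
  rw [e0, e1] at hr
  simp only [Prod.mk.injEq, Fin.ext_iff]
  omega

theorem card_walkWords_edgeType (mb : ℕ) :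
    #{w ∈ univ.image (fun σ : Equiv.Perm (Fin (2 * mb + 3)) => edgeType mb ∘ σ) |
        IsWalkWord w 0 1} = (mb + 1) ^ 2 := by
  rw [walkWords_edgeType_eq, card_image_of_injective _ (loopWord_loopPos_injective mb),
    card_univ, Fintype.card_prod, Fintype.card_fin, sq]

end G2

theorem card_eulerian_G2_general (mb : ℕ) :
    (Finset.univ.filter fun σ : Equiv.Perm (Fin (2 * mb + 3)) =>
        IsEulerianTrail (fun i => srcG2 mb i) (fun i => tgtG2 mb i) 0 1 σ).card
      = (Nat.factorial (mb + 1)) ^ 2 * (mb + 1) := by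
  refine (card_filter_comp_perm (G2.edgeType mb) (IsWalkWord · 0 1)).trans ?_
  rw [G2.card_walkWords_edgeType, G2.card_stabilizer_edgeType, Nat.factorial_succ]
  ring

/-- `G₂` has exactly `((m̄+1)!)²·(m̄+1)` Eulerian trails from `1` to `2`. -/
theorem card_eulerian_G2 (mb : ℕ) (hmb : 1 ≤ mb) :
    (Finset.univ.filter fun σ : Equiv.Perm (Fin (2 * mb + 3)) =>
        IsEulerianTrail (fun i => srcG2 mb i) (fun i => tgtG2 mb i) 0 1 σ).card
      = (Nat.factorial (mb + 1)) ^ 2 * (mb + 1) :=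
  card_eulerian_G2_general mb

end
end

section
/- The standard identity s_5 of degree 5 is not a polynomial identity of M_2(E²), the ring of 2×2 matrices over the 2-generated Grassmann algebra over ℤ: there exist x_1,...,x_5 ∈ M_2(E²) with s_5(x_1,...,x_5) ≠ 0. Concretely, one may take x_1 = v_1 E_{12}, x_2 = v_2 E_{21}, x_3 = E_{11}, x_4 = E_{12}, x_5 = E_{22}. -/
open scoped Classical

noncomputable section

/-! ### Auxiliary material for the proof of `s5_not_PI_M2E2` -/

/-- The Grassmann algebra on two generators, realized concretely as the
quaternion algebra `ℍ[ℤ, 0, 0]` (so `i² = j² = 0` and `ji = -ij`). -/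
abbrev QGr := QuaternionAlgebra ℤ 0 0 0

instance : DecidableEq QGr := fun a b =>
  decidable_of_iff (a.re = b.re ∧ a.imI = b.imI ∧ a.imJ = b.imJ ∧ a.imK = b.imK)
    (by cases a; cases b; simp [QuaternionAlgebra.ext_iff])

/-- The linear map sending `v` to `v 0 · i + v 1 · j` in `QGr`. -/
def grF : (Fin 2 → ℤ) →ₗ[ℤ] QGr where
  toFun v := ⟨0, v 0, v 1, 0⟩
  map_add' u v := by ext <;> simp
  map_smul' r v := by ext <;> simp

lemma grF_sq (m : Fin 2 → ℤ) : grF m * grF m = 0 := by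
  ext <;>
    simp [grF, QuaternionAlgebra.re_mul, QuaternionAlgebra.imI_mul,
      QuaternionAlgebra.imJ_mul, QuaternionAlgebra.imK_mul] <;> ring

/-- The induced algebra map from the exterior algebra to `QGr`. -/
def grPhi : ExteriorAlgebra ℤ (Fin 2 → ℤ) →ₐ[ℤ] QGr :=
  ExteriorAlgebra.lift ℤ ⟨grF, grF_sq⟩

lemma map_sPoly {A B : Type*} [Ring A] [Ring B] (g : A →+* B) {k : ℕ} (x : Fin k → A) :
    g (sPoly x) = sPoly fun i => g (x i) := by
  simp only [sPoly, map_sum, map_zsmul, map_list_prod, List.map_ofFn]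
  rfl

lemma map_stdBasisMatrix {A B : Type*} [Zero A] [Zero B] {n : ℕ} (g : A → B)
    (hg : g 0 = 0) (i j : Fin n) (c : A) :
    (Matrix.single i j c).map g = Matrix.single i j (g c) := by
  ext i' j'
  simp only [Matrix.map_apply, Matrix.single, Matrix.of_apply, apply_ite g, hg]

lemma comp_cons {α β : Type*} {n : ℕ} (g : α → β) (a : α) (s : Fin n → α) :
    (fun i => g (Matrix.vecCons a s i)) = Matrix.vecCons (g a) fun i => g (s i) := by
  funext i
  refine i.cases rfl fun _ => rfl

set_option maxRecDepth 400000 in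
set_option maxHeartbeats 4000000 in
lemma sPoly_QGr_ne_zero :
    sPoly
      (![Matrix.single 0 1 (⟨0, 1, 0, 0⟩ : QGr),
          Matrix.single 1 0 (⟨0, 0, 1, 0⟩ : QGr),
          Matrix.single 0 0 1,
          Matrix.single 0 1 1,
          Matrix.single 1 1 1] :
        Fin 5 → Matrix (Fin 2) (Fin 2) QGr) ≠ 0 := by
  decide

set_option maxRecDepth 400000 in
set_option maxHeartbeats 1000000 in
/-- `s₅` is not a polynomial identity of `M₂(E²)` over `ℤ`:
with `x₁ = v₁E₁₂`, `x₂ = v₂E₂₁`, `x₃ = E₁₁`, `x₄ = E₁₂`, `x₅ = E₂₂` one has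
`s₅(x₁,…,x₅) ≠ 0`. -/
theorem s5_not_PI_M2E2 :
    sPoly
      (![Matrix.single 0 1 (ExteriorAlgebra.ι ℤ (Pi.single (0 : Fin 2) (1 : ℤ))),
          Matrix.single 1 0 (ExteriorAlgebra.ι ℤ (Pi.single (1 : Fin 2) (1 : ℤ))),
          Matrix.single 0 0 1,
          Matrix.single 0 1 1,
          Matrix.single 1 1 1] :
        Fin 5 → Matrix (Fin 2) (Fin 2) (ExteriorAlgebra ℤ (Fin 2 → ℤ))) ≠ 0 := by
  intro h
  apply sPoly_QGr_ne_zero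
  have h2 := congrArg (grPhi.mapMatrix (m := Fin 2)).toRingHom h
  rw [map_zero, map_sPoly] at h2
  have e1 : grPhi (ExteriorAlgebra.ι ℤ (Pi.single (0 : Fin 2) (1 : ℤ))) = (⟨0,1,0,0⟩ : QGr) := by
    rw [grPhi, ExteriorAlgebra.lift_ι_apply]
    ext <;> simp [grF, Pi.single_apply]
  have e2 : grPhi (ExteriorAlgebra.ι ℤ (Pi.single (1 : Fin 2) (1 : ℤ))) = (⟨0,0,1,0⟩ : QGr) := by
    rw [grPhi, ExteriorAlgebra.lift_ι_apply]
    ext <;> simp [grF, Pi.single_apply]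
  rw [show (![Matrix.single 0 1 (⟨0, 1, 0, 0⟩ : QGr),
          Matrix.single 1 0 (⟨0, 0, 1, 0⟩ : QGr),
          Matrix.single 0 0 1,
          Matrix.single 0 1 1,
          Matrix.single 1 1 1] :
        Fin 5 → Matrix (Fin 2) (Fin 2) QGr) =
      fun i => (grPhi.mapMatrix (m := Fin 2)).toRingHom
        (![Matrix.single 0 1 (ExteriorAlgebra.ι ℤ (Pi.single (0 : Fin 2) (1 : ℤ))),
          Matrix.single 1 0 (ExteriorAlgebra.ι ℤ (Pi.single (1 : Fin 2) (1 : ℤ))),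
          Matrix.single 0 0 1,
          Matrix.single 0 1 1,
          Matrix.single 1 1 1] i) from ?_, h2]
  funext i
  refine Fin.cases ?_ (fun i => Fin.cases ?_ (fun i => Fin.cases ?_ (fun i =>
    Fin.cases ?_ (fun i => Fin.cases ?_ (fun i => i.elim0) i) i) i) i) i <;>
    simp only [Matrix.cons_val_zero, Matrix.cons_val_succ, AlgHom.toRingHom_eq_coe,
      RingHom.coe_coe, AlgHom.mapMatrix_apply,
      map_stdBasisMatrix _ (map_zero grPhi), map_one, e1, e2]
end
end
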